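/- arXiv:1301.2469 — 4 statements merged into one kernel-verified Lean document; each statement's English description precedes it below -/
import Mathlib

section
/- Let {Γ_n} be a sequence of real numbers such that there exists a subsequence {Γ_{n_k}} with Γ_{n_k} < Γ_{n_k + 1} for all k. For n ≥ n_0 define τ(n) = max{k ≤ n : Γ_k < Γ_{k+1}}. Then τ is a nondecreasing function of n with τ(n) → ∞, and for all n ≥ n_0 one has Γ_{τ(n)} ≤ Γ_{τ(n)+1} and Γ_n ≤ Γ_{τ(n)+1}. -/
open Filter

section LastIndexBelow

variable {P : ℕ → Prop} {τ : ℕ → ℕ}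

theorem monotoneOn_of_isGreatest {n₀ : ℕ}
    (hτ : ∀ n ≥ n₀, IsGreatest {k | k ≤ n ∧ P k} (τ n)) : MonotoneOn τ (Set.Ici n₀) :=
  fun m hm n hn hmn ↦
    (hτ m hm).mono (hτ n hn) fun _ hk ↦ ⟨hk.1.trans hmn, hk.2⟩

theorem tendsto_atTop_of_isGreatest {n₀ : ℕ} (hP : ∀ N, ∃ k ≥ N, P k)
    (hτ : ∀ n ≥ n₀, IsGreatest {k | k ≤ n ∧ P k} (τ n)) : Tendsto τ atTop atTop := by
  refine tendsto_atTop_atTop.2 fun N ↦ ?_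
  obtain ⟨k, hNk, hk⟩ := hP N
  exact ⟨max n₀ k, fun n hn ↦
    hNk.trans ((hτ n (le_of_max_le_left hn)).2 ⟨le_of_max_le_right hn, hk⟩)⟩

end LastIndexBelow

/-- There is no ascent in `(t, n]`, so `Γ` is antitone on `[t + 1, n]`. -/
theorem le_apply_succ_of_isGreatest_ascent {α : Type*} [LinearOrder α] {Γ : ℕ → α} {n t : ℕ}
    (ht : IsGreatest {k | k ≤ n ∧ Γ k < Γ (k + 1)} t) : Γ n ≤ Γ (t + 1) := by
  obtain ⟨⟨htn, hasc⟩, hlast⟩ := ht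
  rcases htn.eq_or_lt with rfl | htn
  · exact hasc.le
  have hanti : AntitoneOn Γ (Set.Icc (t + 1) n) :=
    antitoneOn_of_succ_le Set.ordConnected_Icc fun k _ hk hk' ↦ by
      rw [Order.succ_eq_add_one] at hk' ⊢
      exact not_lt.1 fun hkasc ↦ not_le.2 hk.1 (hlast ⟨hk'.2.trans' k.le_succ, hkasc⟩)
  exact hanti ⟨le_rfl, htn⟩ ⟨htn, le_rfl⟩ htn

theorem stmt_1 (Γ : ℕ → ℝ) (n₀ : ℕ) (τ : ℕ → ℕ)
    (hsub : ∃ φ : ℕ → ℕ, StrictMono φ ∧ ∀ k, Γ (φ k) < Γ (φ k + 1))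
    (hτ : ∀ n ≥ n₀, τ n ≤ n ∧ Γ (τ n) < Γ (τ n + 1) ∧
      ∀ k ≤ n, Γ k < Γ (k + 1) → k ≤ τ n) :
    (∀ m n, n₀ ≤ m → m ≤ n → τ m ≤ τ n) ∧
    Filter.Tendsto τ Filter.atTop Filter.atTop ∧
    (∀ n ≥ n₀, Γ (τ n) ≤ Γ (τ n + 1) ∧ Γ n ≤ Γ (τ n + 1)) := by
  obtain ⟨φ, hφ, hφasc⟩ := hsub
  have hgreatest : ∀ n ≥ n₀, IsGreatest {k | k ≤ n ∧ Γ k < Γ (k + 1)} (τ n) := fun n hn ↦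
    have ⟨hτn, hasc, hlast⟩ := hτ n hn
    ⟨⟨hτn, hasc⟩, fun k hk ↦ hlast k hk.1 hk.2⟩
  have hfreq : ∀ N, ∃ k ≥ N, Γ k < Γ (k + 1) := fun N ↦ ⟨φ N, hφ.id_le N, hφasc N⟩
  refine ⟨fun m n hm hmn ↦ monotoneOn_of_isGreatest hgreatest hm (hm.trans hmn) hmn,
    tendsto_atTop_of_isGreatest hfreq hgreatest,
    fun n hn ↦ ⟨(hτ n hn).2.1.le, le_apply_succ_of_isGreatest_ascent (hgreatest n hn)⟩⟩
end

section
/- Let C be a closed convex subset of a real Hilbert space, T : C → C a λ-strict pseudocontraction, p ∈ F(T), and define x_{n+1} = β_n u + γ_n x_n + (1 − β_n − γ_n) T_{α_n} x_n with T_α = (1−α)I + αT, α_n ∈ [0, 2λ], β_n, γ_n ∈ (0,1), β_n + γ_n ≤ 1. Then α_n(1 − β_n − γ_n)(2λ − α_n)‖x_n − T x_n‖² ≤ ‖x_n − p‖² − ‖x_{n+1} − p‖² + β_n ‖u − p‖². -/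
/-!
Write `y = x - p` and `d = x - T x`. At the fixed point `p` the pseudocontraction inequality
says `⟪y, d⟫ ≥ λ ‖d‖²`, so expanding `‖T_α x - p‖² = ‖y - α d‖²` gives
`‖T_α x - p‖² ≤ ‖y‖² - α (2λ - α) ‖d‖²`. Since `x_{n+1} - p` is a convex combination of
`u - p`, `x_n - p` and `T_{α_n} x_n - p`, convexity of `‖·‖²` finishes the estimate.
-/

open scoped RealInnerProductSpace

section

variable {H : Type*} [NormedAddCommGroup H] [InnerProductSpace ℝ H]

lemma convexOn_univ_norm_sq : ConvexOn ℝ Set.univ (fun v : H => ‖v‖ ^ 2) :=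
  convexOn_univ_norm.pow (fun _ _ => norm_nonneg _) 2

lemma norm_smul_add_smul_add_smul_sq_le {a b c : ℝ} (ha : 0 ≤ a) (hb : 0 ≤ b) (hc : 0 ≤ c)
    (habc : a + b + c = 1) (u v w : H) :
    ‖a • u + b • v + c • w‖ ^ 2 ≤ a * ‖u‖ ^ 2 + b * ‖v‖ ^ 2 + c * ‖w‖ ^ 2 := by
  have := convexOn_univ_norm_sq.map_sum_le (t := Finset.univ) (w := ![a, b, c]) (p := ![u, v, w])
    (by simp [Fin.forall_fin_succ, ha, hb, hc]) (by simpa [Fin.sum_univ_three] using habc)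
    (by simp)
  simpa [Fin.sum_univ_three] using this

lemma mul_norm_sub_apply_sq_le_inner {T : H → H} {x p : H} {lam : ℝ} (hTp : T p = p)
    (hT : ⟪T x - T p, x - p⟫ ≤ ‖x - p‖ ^ 2 - lam * ‖(x - p) - (T x - T p)‖ ^ 2) :
    lam * ‖x - T x‖ ^ 2 ≤ ⟪x - p, x - T x⟫ := by
  have hd : x - T x = (x - p) - (T x - p) := by abel
  rw [hTp] at hT
  rw [hd, inner_sub_right, real_inner_self_eq_norm_sq, real_inner_comm]
  linarith

lemma norm_averaged_sub_fixedPoint_sq_le {T : H → H} {x p : H} {lam a : ℝ} (hTp : T p = p)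
    (hT : ⟪T x - T p, x - p⟫ ≤ ‖x - p‖ ^ 2 - lam * ‖(x - p) - (T x - T p)‖ ^ 2) (ha : 0 ≤ a) :
    ‖(1 - a) • x + a • T x - p‖ ^ 2 ≤ ‖x - p‖ ^ 2 - a * (2 * lam - a) * ‖x - T x‖ ^ 2 := by
  have hin := mul_norm_sub_apply_sq_le_inner hTp hT
  have he : (1 - a) • x + a • T x - p = (x - p) - a • (x - T x) := by module
  rw [he, norm_sub_sq_real, real_inner_smul_right, norm_smul, mul_pow, Real.norm_eq_abs, sq_abs]
  nlinarith [mul_le_mul_of_nonneg_left hin ha]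

end

theorem stmt_8_general {H : Type*} [NormedAddCommGroup H] [InnerProductSpace ℝ H]
    (C : Set H)
    (T : H → H) (lam : ℝ)
    (hT : ∀ x ∈ C, ∀ y ∈ C,
      (inner ℝ (T x - T y) (x - y) : ℝ) ≤ ‖x - y‖ ^ 2 - lam * ‖(x - y) - (T x - T y)‖ ^ 2)
    (p : H) (hp : p ∈ C) (hfix : T p = p) (u : H)
    (α β γ : ℕ → ℝ)
    (hα : ∀ n, α n ∈ Set.Icc (0:ℝ) (2 * lam))
    (hβ : ∀ n, β n ∈ Set.Ioo (0:ℝ) 1) (hγ : ∀ n, γ n ∈ Set.Ioo (0:ℝ) 1)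
    (hβγ : ∀ n, β n + γ n ≤ 1)
    (x : ℕ → H) (hxC : ∀ n, x n ∈ C)
    (hrec : ∀ n, x (n + 1) =
      β n • u + γ n • x n + (1 - β n - γ n) • ((1 - α n) • x n + α n • T (x n))) :
    ∀ n, α n * (1 - β n - γ n) * (2 * lam - α n) * ‖x n - T (x n)‖ ^ 2 ≤
      ‖x n - p‖ ^ 2 - ‖x (n + 1) - p‖ ^ 2 + β n * ‖u - p‖ ^ 2 := by
  intro n
  have hβ₀ : 0 ≤ β n := (hβ n).1.le
  have hrest : 0 ≤ 1 - β n - γ n := by linarith [hβγ n]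
  have hrelaxed := norm_averaged_sub_fixedPoint_sq_le hfix (hT (x n) (hxC n) p hp) (hα n).1
  have hstep : x (n + 1) - p = β n • (u - p) + γ n • (x n - p)
      + (1 - β n - γ n) • ((1 - α n) • x n + α n • T (x n) - p) := by
    rw [hrec n]; module
  have hjensen := norm_smul_add_smul_add_smul_sq_le hβ₀ (hγ n).1.le hrest (by ring)
    (u - p) (x n - p) ((1 - α n) • x n + α n • T (x n) - p)
  rw [← hstep] at hjensen
  linarith [mul_le_mul_of_nonneg_left hrelaxed hrest, mul_nonneg hβ₀ (sq_nonneg ‖x n - p‖)]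

theorem stmt_8 {H : Type*} [NormedAddCommGroup H] [InnerProductSpace ℝ H]
    (C : Set H) (hCc : IsClosed C) (hCv : Convex ℝ C)
    (T : H → H) (hTC : ∀ x ∈ C, T x ∈ C) (lam : ℝ) (hlam : lam ∈ Set.Ioo (0:ℝ) 1)
    (hT : ∀ x ∈ C, ∀ y ∈ C,
      (inner ℝ (T x - T y) (x - y) : ℝ) ≤ ‖x - y‖ ^ 2 - lam * ‖(x - y) - (T x - T y)‖ ^ 2)
    (p : H) (hp : p ∈ C) (hfix : T p = p) (u : H) (hu : u ∈ C)
    (α β γ : ℕ → ℝ)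
    (hα : ∀ n, α n ∈ Set.Icc (0:ℝ) (2 * lam))
    (hβ : ∀ n, β n ∈ Set.Ioo (0:ℝ) 1) (hγ : ∀ n, γ n ∈ Set.Ioo (0:ℝ) 1)
    (hβγ : ∀ n, β n + γ n ≤ 1)
    (x : ℕ → H) (hxC : ∀ n, x n ∈ C)
    (hrec : ∀ n, x (n + 1) =
      β n • u + γ n • x n + (1 - β n - γ n) • ((1 - α n) • x n + α n • T (x n))) :
    ∀ n, α n * (1 - β n - γ n) * (2 * lam - α n) * ‖x n - T (x n)‖ ^ 2 ≤
      ‖x n - p‖ ^ 2 - ‖x (n + 1) - p‖ ^ 2 + β n * ‖u - p‖ ^ 2 :=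
  stmt_8_general C T lam hT p hp hfix u α β γ hα hβ hγ hβγ x hxC hrec
end

section
/- Let C be a closed convex subset of a real Hilbert space and T : C → C a λ-strict pseudocontraction with F(T) ≠ ∅. Let u, x_0 ∈ C and x_{n+1} = β_n u + γ_n x_n + (1 − β_n − γ_n)[α_n T x_n + (1 − α_n) x_n], where α_n ∈ [0, 2λ] with liminf α_n(2λ − α_n) > 0, β_n → 0 with ∑ β_n = ∞, and limsup γ_n < 1 (all in (0,1) with β_n + γ_n ≤ 1). Then {x_n} converges strongly to a fixed point of T. -/
/-!
Let `z` be the fixed point of `T` nearest to `u` and `sₙ = ‖xₙ - z‖²`. The map `I - T` is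
`λ`-inverse strongly monotone, so the averaged step `αₙ T + (1 - αₙ) I` moves points towards `z`
with a gain of `αₙ (2λ - αₙ) ‖xₙ - T xₙ‖²`. This gives two recursions,
`s_{n+1} ≤ (1 - βₙ) sₙ + 2 βₙ ⟪u - z, x_{n+1} - z⟫` and, eventually,
`s_{n+1} ≤ sₙ + βₙ ‖u - z‖² - c ‖xₙ - T xₙ‖²` for some `c > 0`.
Maingé's argument reduces `sₙ → 0` to: along any filter on which `‖xₙ - T xₙ‖ → 0`, eventually
`⟪u - z, xₙ - z⟫ ≤ ε`. Bounded sequences have weak limits along ultrafilters (by Riesz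
representation), which replaces the extraction of weakly convergent subsequences; since `I - T`
is demiclosed at `0`, such a weak limit is a fixed point `p`, and `⟪u - z, p - z⟫ ≤ 0` because
`z` is the projection of `u` onto the fixed-point set.
-/

open Filter Topology RealInnerProductSpace

theorem tendsto_zero_of_forall_eventually_le {ι : Type*} {l : Filter ι} {f : ι → ℝ}
    (hf : ∀ i, 0 ≤ f i) (h : ∀ ε > 0, ∀ᶠ i in l, f i ≤ ε) : Tendsto f l (𝓝 0) :=
  tendsto_order.2 ⟨fun _ ha => Eventually.of_forall fun i => ha.trans_le (hf i),
    fun _ ha => (h _ (half_pos ha)).mono fun _ hi => hi.trans_lt (half_lt_self ha)⟩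

theorem tendsto_zero_of_eventually_le_one_sub_mul {r b : ℕ → ℝ} (hr : ∀ n, 0 ≤ r n)
    (hrec : ∀ᶠ n in atTop, r (n + 1) ≤ (1 - b n) * r n)
    (hb : Tendsto (fun n => ∑ i ∈ Finset.range n, b i) atTop atTop) :
    Tendsto r atTop (𝓝 0) := by
  obtain ⟨N, hN⟩ := eventually_atTop.1 hrec
  set S := fun n => ∑ i ∈ Finset.range n, b i
  have hle : ∀ n ≥ N, r n ≤ Real.exp (-(S n - S N)) * r N := by
    intro n hn
    induction n, hn using Nat.le_induction with
    | base => simp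
    | succ n hn ih =>
      calc r (n + 1) ≤ (1 - b n) * r n := hN n hn
        _ ≤ Real.exp (-b n) * r n :=
          mul_le_mul_of_nonneg_right (by linarith [Real.add_one_le_exp (-b n)]) (hr n)
        _ ≤ Real.exp (-b n) * (Real.exp (-(S n - S N)) * r N) := by gcongr
        _ = Real.exp (-(S (n + 1) - S N)) * r N := by
          simp only [S, Finset.sum_range_succ, ← mul_assoc, ← Real.exp_add]
          ring_nf
  have hexp : Tendsto (fun n => Real.exp (-(S n - S N)) * r N) atTop (𝓝 0) := by
    have hS : Tendsto (fun n => S n - S N) atTop atTop := by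
      simpa [sub_eq_add_neg] using tendsto_atTop_add_const_right atTop (-S N) hb
    simpa using (Real.tendsto_exp_neg_atTop_nhds_zero.comp hS).mul_const (r N)
  exact squeeze_zero' (Eventually.of_forall hr) (eventually_atTop.2 ⟨N, hle⟩) hexp

theorem tendsto_zero_of_le_one_sub_mul_add_mul {s b c : ℕ → ℝ} (hs : ∀ n, 0 ≤ s n)
    (hb : ∀ n, b n ∈ Set.Icc (0 : ℝ) 1)
    (hrec : ∀ n, s (n + 1) ≤ (1 - b n) * s n + b n * c n)
    (hbsum : Tendsto (fun n => ∑ i ∈ Finset.range n, b i) atTop atTop)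
    (hc : ∀ ε > 0, ∀ᶠ n in atTop, c n ≤ ε) : Tendsto s atTop (𝓝 0) := by
  refine tendsto_zero_of_forall_eventually_le hs fun ε hε => ?_
  have hexcess : Tendsto (fun n => max (s n - ε / 2) 0) atTop (𝓝 0) := by
    refine tendsto_zero_of_eventually_le_one_sub_mul (fun n => le_max_right _ _) ?_ hbsum
    filter_upwards [hc (ε / 2) (half_pos hε)] with n hn
    obtain ⟨hb0, hb1⟩ := hb n
    refine max_le ?_ (mul_nonneg (sub_nonneg.2 hb1) (le_max_right _ _))
    nlinarith [hrec n, mul_le_mul_of_nonneg_left hn hb0,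
      mul_le_mul_of_nonneg_left (le_max_left (s n - ε / 2) 0) (sub_nonneg.2 hb1)]
  filter_upwards [hexcess.eventually (eventually_le_nhds (half_pos hε))] with n hn
  linarith [le_max_left (s n - ε / 2) 0]

theorem exists_tendsto_atTop_lt_succ_and_succ_le {α : Type*} [LinearOrder α] {s : ℕ → α}
    (h : ∃ᶠ n in atTop, s n < s (n + 1)) :
    ∃ τ : ℕ → ℕ, Tendsto τ atTop atTop ∧
      ∀ᶠ n in atTop, s (τ n) < s (τ n + 1) ∧ s (n + 1) ≤ s (τ n + 1) := by
  classical
  set τ := fun n => Nat.findGreatest (fun k => s k < s (k + 1)) n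
  refine ⟨τ, tendsto_atTop_atTop.2 fun N => ?_, ?_⟩
  · obtain ⟨m, hNm, hm⟩ := frequently_atTop.1 h N
    exact ⟨m, fun n hn => hNm.trans (Nat.le_findGreatest hn hm)⟩
  · obtain ⟨m, -, hm⟩ := frequently_atTop.1 h 0
    filter_upwards [eventually_ge_atTop m] with n hn
    refine ⟨Nat.findGreatest_spec (P := fun k => s k < s (k + 1)) hn hm, ?_⟩
    have hτle : τ n ≤ n := Nat.findGreatest_le n
    have hgreatest : ∀ k, τ n < k → k ≤ n → s (k + 1) ≤ s k :=
      fun k h1 h2 => not_lt.1 (Nat.findGreatest_is_greatest h1 h2)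
    have hdesc : ∀ j, τ n + 1 ≤ j → j ≤ n + 1 → s j ≤ s (τ n + 1) := by
      intro j hj hjn
      induction j, hj using Nat.le_induction with
      | base => exact le_rfl
      | succ j hj ih => exact (hgreatest j (by omega) (by omega)).trans (ih (by omega))
    exact hdesc (n + 1) (by omega) le_rfl

theorem tendsto_sub_succ_of_eventually_le_of_bddBelow {s : ℕ → ℝ} (hs : BddBelow (Set.range s))
    (h : ∀ᶠ n in atTop, s (n + 1) ≤ s n) : Tendsto (fun n => s n - s (n + 1)) atTop (𝓝 0) := by
  obtain ⟨N, hN⟩ := eventually_atTop.1 h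
  have hanti : Antitone fun k => s (k + N) :=
    antitone_nat_of_succ_le fun k => by simpa [add_right_comm] using hN (k + N) le_add_self
  have hlim := (tendsto_add_atTop_iff_nat N).1
    (tendsto_atTop_ciInf hanti (hs.mono (Set.range_comp_subset_range _ s)))
  simpa using hlim.sub (hlim.comp (tendsto_add_atTop_nat 1))

theorem tendsto_zero_of_le_one_sub_mul_add_mul_of_le_add_sub {s b e c : ℕ → ℝ} {K : ℝ}
    (hs : ∀ n, 0 ≤ s n) (he : ∀ n, 0 ≤ e n) (hb : ∀ n, b n ∈ Set.Ioc (0 : ℝ) 1)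
    (hb0 : Tendsto b atTop (𝓝 0))
    (hbsum : Tendsto (fun n => ∑ i ∈ Finset.range n, b i) atTop atTop)
    (hrec : ∀ n, s (n + 1) ≤ (1 - b n) * s n + b n * c n)
    (hdesc : ∀ᶠ n in atTop, s (n + 1) ≤ s n + b n * K - e n)
    (hc : ∀ l ≤ atTop, Tendsto e l (𝓝 0) → ∀ ε > 0, ∀ᶠ n in l, c n ≤ ε) :
    Tendsto s atTop (𝓝 0) := by
  by_cases hinc : ∃ᶠ n in atTop, s n < s (n + 1)
  · obtain ⟨τ, hτ, hτs⟩ := exists_tendsto_atTop_lt_succ_and_succ_le hinc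
    have heτ : Tendsto (e ∘ τ) atTop (𝓝 0) := by
      refine squeeze_zero' (Eventually.of_forall fun n => he _) ?_
        (by simpa using (hb0.comp hτ).mul_const K)
      filter_upwards [hτ.eventually hdesc, hτs] with n h1 h2
      exact (by linarith [h2.1] : e (τ n) ≤ b (τ n) * K)
    refine (tendsto_add_atTop_iff_nat 1).1 (tendsto_zero_of_forall_eventually_le
      (fun n => hs _) fun ε hε => ?_)
    filter_upwards [hτs, hc _ hτ (tendsto_map'_iff.2 heτ) ε hε] with n ⟨hup, hle⟩ hcε
    obtain ⟨hb0, hb1⟩ := hb (τ n)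
    -- at an ascent `s (τ n) < s (τ n + 1)`, `hrec` forces `s (τ n) ≤ c (τ n)`
    have hsc : s (τ n) ≤ c (τ n) := by nlinarith [hrec (τ n)]
    have hcε : c (τ n) ≤ ε := hcε
    nlinarith [hrec (τ n), mul_le_mul_of_nonneg_left (hsc.trans hcε) (sub_nonneg.2 hb1),
      mul_le_mul_of_nonneg_left hcε hb0.le]
  · have hdiff := tendsto_sub_succ_of_eventually_le_of_bddBelow ⟨0, by simpa [lowerBounds] using hs⟩
      ((not_frequently.1 hinc).mono fun n h => not_lt.1 h)
    have he0 : Tendsto e atTop (𝓝 0) := by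
      refine squeeze_zero' (Eventually.of_forall he) ?_ (by simpa using hdiff.add (hb0.mul_const K))
      filter_upwards [hdesc] with n hn
      linarith
    exact tendsto_zero_of_le_one_sub_mul_add_mul hs (fun n => Set.Ioc_subset_Icc_self (hb n))
      hrec hbsum (hc atTop le_rfl he0)

theorem le_max_of_succ_le_max {α : Type*} [LinearOrder α] {r : ℕ → α} {M : α}
    (h : ∀ n, r (n + 1) ≤ max M (r n)) (n : ℕ) : r n ≤ max (r 0) M := by
  induction n with
  | zero => exact le_max_left _ _
  | succ n ih => exact (h n).trans (max_le (le_max_right _ _) ih)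

theorem exists_pos_eventually_le_of_liminf_pos {f : ℕ → ℝ} (hf : ∀ n, 0 ≤ f n)
    (h : 0 < liminf f atTop) : ∃ a > 0, ∀ᶠ n in atTop, a ≤ f n :=
  ⟨_, half_pos h, (eventually_lt_of_lt_liminf (half_lt_self h) (isBoundedUnder_of ⟨0, hf⟩)).mono
    fun _ => le_of_lt⟩

theorem exists_pos_eventually_le_one_sub_sub {β γ : ℕ → ℝ} (hβ : Tendsto β atTop (𝓝 0))
    (hγ : IsBoundedUnder (· ≤ ·) atTop γ) (hγsup : limsup γ atTop < 1) :
    ∃ d > 0, ∀ᶠ n in atTop, d ≤ 1 - β n - γ n := by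
  set g := limsup γ atTop
  refine ⟨(1 - g) / 4, by linarith, ?_⟩
  filter_upwards [eventually_lt_of_limsup_lt (by linarith : g < (1 + g) / 2) hγ,
    hβ.eventually (eventually_lt_nhds (by linarith : (0 : ℝ) < (1 - g) / 4))] with n h1 h2
  linarith

theorem tendsto_zero_of_tendsto_const_mul_norm_sq {E ι : Type*} [SeminormedAddGroup E]
    {l : Filter ι} {f : ι → E} {c : ℝ}
    (hc : 0 < c) (h : Tendsto (fun i => c * ‖f i‖ ^ 2) l (𝓝 0)) : Tendsto f l (𝓝 0) := by
  have hsq : Tendsto (fun i => ‖f i‖ ^ 2) l (𝓝 0) := by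
    simpa [inv_mul_cancel_left₀ hc.ne'] using h.const_mul c⁻¹
  simpa [Real.sqrt_sq (norm_nonneg _), tendsto_zero_iff_norm_tendsto_zero] using hsq.sqrt

section Hilbert

variable {H : Type*} [NormedAddCommGroup H] [InnerProductSpace ℝ H]

theorem tendsto_inner_of_tendsto_zero {ι : Type*} {l : Filter ι} {a b : ι → H} {M : ℝ}
    (ha : Tendsto a l (𝓝 0)) (hb : ∀ i, ‖b i‖ ≤ M) : Tendsto (fun i => ⟪a i, b i⟫) l (𝓝 0) := by
  refine squeeze_zero_norm (fun i => norm_inner_le_norm (a i) (b i)) ?_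
  refine (tendsto_zero_iff_norm_tendsto_zero.1 ha).zero_mul_isBoundedUnder_le ?_
  exact isBoundedUnder_of ⟨M, fun i => by simpa using hb i⟩

section ConvexCombination

variable {β γ : ℝ}

theorem norm_combination_sub_le (hβ : 0 ≤ β) (hγ : 0 ≤ γ) (hβγ : β + γ ≤ 1) (u x y z : H) :
    ‖β • u + γ • x + (1 - β - γ) • y - z‖ ≤
      β * ‖u - z‖ + γ * ‖x - z‖ + (1 - β - γ) * ‖y - z‖ := by
  rw [show β • u + γ • x + (1 - β - γ) • y - z =
      β • (u - z) + γ • (x - z) + (1 - β - γ) • (y - z) by module]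
  refine norm_add₃_le.trans_eq ?_
  rw [norm_smul, norm_smul, norm_smul, Real.norm_of_nonneg hβ, Real.norm_of_nonneg hγ,
    Real.norm_of_nonneg (by linarith)]

theorem norm_combination_sub_le_max (hβ : 0 ≤ β) (hγ : 0 ≤ γ) (hβγ : β + γ ≤ 1) {u x y z : H}
    (hy : ‖y - z‖ ≤ ‖x - z‖) :
    ‖β • u + γ • x + (1 - β - γ) • y - z‖ ≤ max ‖u - z‖ ‖x - z‖ := by
  refine (norm_combination_sub_le hβ hγ hβγ u x y z).trans ?_
  nlinarith [le_max_left ‖u - z‖ ‖x - z‖, le_max_right ‖u - z‖ ‖x - z‖]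

theorem norm_combination_sub_sq_le (hβ : 0 ≤ β) (hγ : 0 ≤ γ) (hβγ : β + γ ≤ 1) (u x y z : H) :
    ‖β • u + γ • x + (1 - β - γ) • y - z‖ ^ 2 ≤
      β * ‖u - z‖ ^ 2 + γ * ‖x - z‖ ^ 2 + (1 - β - γ) * ‖y - z‖ ^ 2 := by
  have h := norm_combination_sub_le hβ hγ hβγ u x y z
  have hδ : 0 ≤ 1 - β - γ := by linarith
  -- Jensen for `t ↦ t ^ 2`, whose gap is a sum of terms `βγ (‖u - z‖ - ‖x - z‖) ^ 2`
  nlinarith [pow_le_pow_left₀ (norm_nonneg _) h 2, norm_nonneg (u - z), norm_nonneg (x - z),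
    norm_nonneg (y - z), mul_nonneg (mul_nonneg hβ hγ) (sq_nonneg (‖u - z‖ - ‖x - z‖)),
    mul_nonneg (mul_nonneg hβ hδ) (sq_nonneg (‖u - z‖ - ‖y - z‖)),
    mul_nonneg (mul_nonneg hγ hδ) (sq_nonneg (‖x - z‖ - ‖y - z‖))]

theorem norm_combination_sub_sq_le_one_sub_mul_add (hβ : 0 ≤ β) (hγ : 0 ≤ γ) (hβγ : β + γ ≤ 1)
    {u x y z : H} (hy : ‖y - z‖ ≤ ‖x - z‖) :
    ‖β • u + γ • x + (1 - β - γ) • y - z‖ ^ 2 ≤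
      (1 - β) * ‖x - z‖ ^ 2 + β * (2 * ⟪u - z, β • u + γ • x + (1 - β - γ) • y - z⟫) := by
  set A := γ • (x - z) + (1 - β - γ) • (y - z)
  have hsplit : β • u + γ • x + (1 - β - γ) • y - z = A + β • (u - z) := by module
  have hδ : 0 ≤ 1 - β - γ := by linarith
  have hA : ‖A‖ ≤ (1 - β) * ‖x - z‖ := by
    refine (norm_add_le _ _).trans ?_
    rw [norm_smul, norm_smul, Real.norm_of_nonneg hγ, Real.norm_of_nonneg hδ]
    nlinarith [mul_le_mul_of_nonneg_left hy hδ]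
  have hA2 : ‖A‖ ^ 2 ≤ (1 - β) * ‖x - z‖ ^ 2 := by
    nlinarith [pow_le_pow_left₀ (norm_nonneg _) hA 2,
      mul_nonneg (mul_nonneg hβ (by linarith : 0 ≤ 1 - β)) (sq_nonneg ‖x - z‖)]
  rw [hsplit, norm_add_sq_real, inner_add_right, real_inner_smul_right, real_inner_smul_right,
    real_inner_self_eq_norm_sq, norm_smul, Real.norm_of_nonneg hβ, real_inner_comm A]
  nlinarith [sq_nonneg (β * ‖u - z‖)]

theorem norm_combination_smul_sub_le {a : ℝ} (hβ : 0 ≤ β) (hγ : 0 ≤ γ) (hβγ : β + γ ≤ 1)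
    (ha : 0 ≤ a) (u x v : H) :
    ‖β • u + γ • x + (1 - β - γ) • (a • v + (1 - a) • x) - x‖ ≤ β * ‖u - x‖ + a * ‖x - v‖ := by
  have hδ : 0 ≤ 1 - β - γ := by linarith
  rw [show β • u + γ • x + (1 - β - γ) • (a • v + (1 - a) • x) - x =
      β • (u - x) + ((1 - β - γ) * a) • (v - x) by module]
  refine (norm_add_le _ _).trans ?_
  rw [norm_smul, norm_smul, Real.norm_of_nonneg hβ, Real.norm_of_nonneg (mul_nonneg hδ ha),
    norm_sub_rev v]
  nlinarith [mul_nonneg (mul_nonneg (by linarith : 0 ≤ β + γ) ha) (norm_nonneg (x - v))]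

end ConvexCombination

theorem tendsto_succ_sub_of_tendsto_sub_map {l : Filter ℕ} {T : H → H} {u : H} {x : ℕ → H}
    {α β γ : ℕ → ℝ} {A M : ℝ}
    (hrec : ∀ n, x (n + 1) =
      β n • u + γ n • x n + (1 - β n - γ n) • (α n • T (x n) + (1 - α n) • x n))
    (hcoef : ∀ n, 0 ≤ β n ∧ 0 ≤ γ n ∧ β n + γ n ≤ 1) (hα : ∀ n, α n ∈ Set.Icc 0 A)
    (hx : ∀ n, ‖x n‖ ≤ M) (hβ : Tendsto β l (𝓝 0))
    (hT : Tendsto (fun n => x n - T (x n)) l (𝓝 0)) :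
    Tendsto (fun n => x (n + 1) - x n) l (𝓝 0) := by
  have hbound : Tendsto (fun n => β n * (‖u‖ + M) + A * ‖x n - T (x n)‖) l (𝓝 0) := by
    simpa using (hβ.mul_const _).add (hT.norm.const_mul A)
  refine squeeze_zero_norm (fun n => ?_) hbound
  rw [hrec n]
  obtain ⟨hβn, hγn, hβγn⟩ := hcoef n
  exact (norm_combination_smul_sub_le hβn hγn hβγn (hα n).1 u (x n) (T (x n))).trans
    (add_le_add (mul_le_mul_of_nonneg_left ((norm_sub_le _ _).trans (add_le_add le_rfl (hx n))) hβn)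
      (mul_le_mul_of_nonneg_right (hα n).2 (norm_nonneg _)))

def TendstoWeakly {ι : Type*} (y : ι → H) (l : Filter ι) (w : H) : Prop :=
  ∀ v, Tendsto (fun i => ⟪y i, v⟫) l (𝓝 ⟪w, v⟫)

theorem TendstoWeakly.tendsto_inner_sub {ι : Type*} {y : ι → H} {l : Filter ι} {w : H}
    (hw : TendstoWeakly y l w) (v a : H) :
    Tendsto (fun i => ⟪v, y i - a⟫) l (𝓝 ⟪v, w - a⟫) := by
  simpa only [inner_sub_right, real_inner_comm v] using (hw v).sub_const ⟪v, a⟫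

theorem exists_tendstoWeakly_of_norm_le [CompleteSpace H] {ι : Type*} (𝒰 : Ultrafilter ι)
    {y : ι → H} {M : ℝ} (hy : ∀ i, ‖y i‖ ≤ M) : ∃ w, TendstoWeakly y 𝒰 w := by
  have hlim : ∀ v, ∃ L, Tendsto (fun i => ⟪y i, v⟫) 𝒰 (𝓝 L) := by
    intro v
    have hmem : ∀ i, ⟪y i, v⟫ ∈ Set.Icc (-(M * ‖v‖)) (M * ‖v‖) := fun i =>
      abs_le.1 ((abs_real_inner_le_norm _ _).trans
        (mul_le_mul_of_nonneg_right (hy i) (norm_nonneg v)))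
    obtain ⟨L, -, hL⟩ := isCompact_Icc.ultrafilter_le_nhds' (𝒰.map fun i => ⟪y i, v⟫)
      (Ultrafilter.mem_map.2 (Filter.univ_mem' hmem))
    exact ⟨L, hL⟩
  choose L hL using hlim
  let ℓ : H →ₗ[ℝ] ℝ :=
    { toFun := L
      map_add' := fun a b => tendsto_nhds_unique (hL (a + b))
        (by simpa only [inner_add_right] using (hL a).add (hL b))
      map_smul' := fun c a => tendsto_nhds_unique (hL (c • a))
        (by simpa only [real_inner_smul_right, RingHom.id_apply, smul_eq_mul] using
          (hL a).const_mul c) }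
  have hℓ : ∀ v, ‖ℓ v‖ ≤ M * ‖v‖ := fun v =>
    le_of_tendsto (hL v).norm (Eventually.of_forall fun i =>
      (norm_inner_le_norm _ _).trans (mul_le_mul_of_nonneg_right (hy i) (norm_nonneg v)))
  refine ⟨(InnerProductSpace.toDual ℝ H).symm (ℓ.mkContinuous M hℓ), fun v => ?_⟩
  rw [InnerProductSpace.toDual_symm_apply]
  exact hL v

theorem IsClosed.mem_of_tendstoWeakly [CompleteSpace H] {C : Set H} (hC : IsClosed C)
    (hCv : Convex ℝ C) {ι : Type*} {l : Filter ι} [l.NeBot] {y : ι → H} {w : H}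
    (hyC : ∀ᶠ i in l, y i ∈ C) (hw : TendstoWeakly y l w) : w ∈ C := by
  by_contra hwC
  obtain ⟨f, c, hfC, hfw⟩ := geometric_hahn_banach_closed_point hCv hC hwC
  have hf : ∀ v, f v = ⟪v, (InnerProductSpace.toDual ℝ H).symm f⟫ := fun v => by
    rw [real_inner_comm, InnerProductSpace.toDual_symm_apply]
  have : f w ≤ c := by
    rw [hf]
    exact le_of_tendsto (hw _) (hyC.mono fun i hi => by rw [← hf]; exact (hfC _ hi).le)
  linarith

def IsStrictPseudocontractionOn (T : H → H) (C : Set H) (lam : ℝ) : Prop :=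
  ∀ x ∈ C, ∀ y ∈ C, ⟪T x - T y, x - y⟫ ≤ ‖x - y‖ ^ 2 - lam * ‖(x - y) - (T x - T y)‖ ^ 2

namespace IsStrictPseudocontractionOn

variable {C : Set H} {T : H → H} {lam : ℝ}

theorem mul_norm_sq_le_inner (hT : IsStrictPseudocontractionOn T C lam) {x y : H} (hx : x ∈ C)
    (hy : y ∈ C) : lam * ‖(x - T x) - (y - T y)‖ ^ 2 ≤ ⟪(x - T x) - (y - T y), x - y⟫ := by
  have h := hT x hx y hy
  rw [show (x - T x) - (y - T y) = (x - y) - (T x - T y) by abel, inner_sub_left,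
    real_inner_self_eq_norm_sq]
  linarith

theorem mul_norm_sq_le_inner_of_isFixedPt (hT : IsStrictPseudocontractionOn T C lam) {x p : H}
    (hx : x ∈ C) (hp : p ∈ C) (hTp : T p = p) :
    lam * ‖x - T x‖ ^ 2 ≤ ⟪x - T x, x - p⟫ := by
  simpa [hTp] using hT.mul_norm_sq_le_inner hx hp

theorem inter_fixedPoints_eq (hT : IsStrictPseudocontractionOn T C lam) (hlam : 0 < lam) :
    C ∩ Function.fixedPoints T = C ∩ ⋂ x ∈ C, {p | lam * ‖x - T x‖ ^ 2 ≤ ⟪x - T x, x - p⟫} := by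
  ext p
  simp only [Set.mem_inter_iff, Set.mem_iInter, Set.mem_ofPred_eq, Function.mem_fixedPoints,
    Function.IsFixedPt]
  refine ⟨fun ⟨hp, hTp⟩ => ⟨hp, fun x hx => hT.mul_norm_sq_le_inner_of_isFixedPt hx hp hTp⟩,
    fun ⟨hp, h⟩ => ⟨hp, ?_⟩⟩
  have h0 : lam * ‖p - T p‖ ^ 2 ≤ 0 := by simpa using h p hp
  have h1 : ‖p - T p‖ ^ 2 ≤ 0 := by nlinarith [sq_nonneg ‖p - T p‖]
  exact (sub_eq_zero.1 (norm_eq_zero.1 (pow_eq_zero_iff two_ne_zero |>.1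
    (le_antisymm h1 (sq_nonneg _))))).symm

theorem isClosed_inter_fixedPoints (hT : IsStrictPseudocontractionOn T C lam) (hlam : 0 < lam)
    (hC : IsClosed C) : IsClosed (C ∩ Function.fixedPoints T) := by
  rw [hT.inter_fixedPoints_eq hlam]
  exact hC.inter (isClosed_biInter fun x _ => isClosed_le continuous_const (by fun_prop))

theorem convex_inter_fixedPoints (hT : IsStrictPseudocontractionOn T C lam) (hlam : 0 < lam)
    (hC : Convex ℝ C) : Convex ℝ (C ∩ Function.fixedPoints T) := by
  rw [hT.inter_fixedPoints_eq hlam]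
  refine hC.inter (convex_iInter₂ fun x _ => ?_)
  intro p hp q hq a b ha hb hab
  obtain rfl : b = 1 - a := by linarith
  simp only [Set.mem_ofPred_eq] at hp hq ⊢
  rw [show x - (a • p + (1 - a) • q) = a • (x - p) + (1 - a) • (x - q) by module,
    inner_add_right, real_inner_smul_right, real_inner_smul_right]
  nlinarith [mul_le_mul_of_nonneg_left hp ha, mul_le_mul_of_nonneg_left hq hb]

theorem exists_isFixedPt_inner_le [CompleteSpace H] (hT : IsStrictPseudocontractionOn T C lam)
    (hlam : 0 < lam) (hC : IsClosed C) (hCv : Convex ℝ C) (hF : ∃ p ∈ C, T p = p) (u : H) :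
    ∃ z ∈ C, T z = z ∧ ∀ p ∈ C, T p = p → ⟪u - z, p - z⟫ ≤ 0 := by
  have hconv := hT.convex_inter_fixedPoints hlam hCv
  obtain ⟨z, hz, hmin⟩ := exists_norm_eq_iInf_of_complete_convex hF
    (hT.isClosed_inter_fixedPoints hlam hC).isComplete hconv u
  exact ⟨z, hz.1, hz.2, fun p hp hTp =>
    (norm_eq_iInf_iff_real_inner_le_zero hconv hz).1 hmin p ⟨hp, hTp⟩⟩

theorem isFixedPt_of_tendstoWeakly (hT : IsStrictPseudocontractionOn T C lam) (hlam : 0 < lam)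
    {ι : Type*} {l : Filter ι} [l.NeBot] {y : ι → H} {w : H} {M : ℝ} (hyC : ∀ i, y i ∈ C)
    (hwC : w ∈ C) (hyM : ∀ i, ‖y i‖ ≤ M) (hw : TendstoWeakly y l w)
    (hyT : Tendsto (fun i => y i - T (y i)) l (𝓝 0)) : T w = w := by
  set e := w - T w
  have hleft : Tendsto (fun i => lam * ‖(y i - T (y i)) - e‖ ^ 2) l (𝓝 (lam * ‖e‖ ^ 2)) := by
    simpa using (((hyT.sub_const e).norm).pow 2).const_mul lam
  have hright : Tendsto (fun i => ⟪(y i - T (y i)) - e, y i - w⟫) l (𝓝 0) := by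
    have hstrong := tendsto_inner_of_tendsto_zero hyT (M := M + ‖w‖)
      fun i => (norm_sub_le (y i) w).trans (by linarith [hyM i])
    simpa [inner_sub_left] using hstrong.sub (hw.tendsto_inner_sub e w)
  have h : lam * ‖e‖ ^ 2 ≤ 0 := le_of_tendsto_of_tendsto hleft hright
    (Eventually.of_forall fun i => hT.mul_norm_sq_le_inner (hyC i) hwC)
  have h1 : ‖e‖ ^ 2 ≤ 0 := by nlinarith [sq_nonneg ‖e‖]
  exact (sub_eq_zero.1 (norm_eq_zero.1 (pow_eq_zero_iff two_ne_zero |>.1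
    (le_antisymm h1 (sq_nonneg _))))).symm

theorem eventually_inner_le [CompleteSpace H] (hT : IsStrictPseudocontractionOn T C lam)
    (hlam : 0 < lam) (hC : IsClosed C) (hCv : Convex ℝ C) {u z : H}
    (hz : ∀ p ∈ C, T p = p → ⟪u - z, p - z⟫ ≤ 0) {ι : Type*} {l : Filter ι} {y : ι → H}
    {M : ℝ} (hyC : ∀ i, y i ∈ C) (hyM : ∀ i, ‖y i‖ ≤ M)
    (hyT : Tendsto (fun i => y i - T (y i)) l (𝓝 0)) {ε : ℝ} (hε : 0 < ε) :
    ∀ᶠ i in l, ⟪u - z, y i - z⟫ ≤ ε := by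
  by_contra h
  have : (l ⊓ 𝓟 {i | ε < ⟪u - z, y i - z⟫}).NeBot :=
    frequently_iff_neBot.1 ((not_eventually.1 h).mono fun _ => lt_of_not_ge)
  set 𝒰 := Ultrafilter.of (l ⊓ 𝓟 {i | ε < ⟪u - z, y i - z⟫})
  have h𝒰 : (𝒰 : Filter ι) ≤ l ⊓ 𝓟 {i | ε < ⟪u - z, y i - z⟫} := Ultrafilter.of_le _
  obtain ⟨w, hw⟩ := exists_tendstoWeakly_of_norm_le 𝒰 hyM
  have hwC : w ∈ C := hC.mem_of_tendstoWeakly hCv (Eventually.of_forall hyC) hw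
  have hwT : T w = w :=
    hT.isFixedPt_of_tendstoWeakly hlam hyC hwC hyM hw (hyT.mono_left (h𝒰.trans inf_le_left))
  have hlarge : ∀ᶠ i in (𝒰 : Filter ι), ε < ⟪u - z, y i - z⟫ :=
    le_principal_iff.1 (h𝒰.trans inf_le_right)
  have : ε ≤ ⟪u - z, w - z⟫ :=
    ge_of_tendsto (hw.tendsto_inner_sub _ _) (hlarge.mono fun _ => le_of_lt)
  linarith [hz w hwC hwT]

theorem eventually_two_inner_succ_le [CompleteSpace H] (hT : IsStrictPseudocontractionOn T C lam)
    (hlam : 0 < lam) (hC : IsClosed C) (hCv : Convex ℝ C) {u z : H}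
    (hz : ∀ p ∈ C, T p = p → ⟪u - z, p - z⟫ ≤ 0) {x : ℕ → H} {α β γ : ℕ → ℝ} {A M : ℝ}
    (hrec : ∀ n, x (n + 1) =
      β n • u + γ n • x n + (1 - β n - γ n) • (α n • T (x n) + (1 - α n) • x n))
    (hcoef : ∀ n, 0 ≤ β n ∧ 0 ≤ γ n ∧ β n + γ n ≤ 1) (hα : ∀ n, α n ∈ Set.Icc 0 A)
    (hxC : ∀ n, x n ∈ C) (hxM : ∀ n, ‖x n‖ ≤ M) {l : Filter ℕ} (hβ : Tendsto β l (𝓝 0))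
    (hD : Tendsto (fun n => x n - T (x n)) l (𝓝 0)) {ε : ℝ} (hε : 0 < ε) :
    ∀ᶠ n in l, 2 * ⟪u - z, x (n + 1) - z⟫ ≤ ε := by
  have hmove := tendsto_succ_sub_of_tendsto_sub_map hrec hcoef hα hxM hβ hD
  filter_upwards [hT.eventually_inner_le hlam hC hCv hz hxC hxM hD (by positivity : 0 < ε / 4),
    (tendsto_inner_of_tendsto_zero hmove fun _ => le_refl ‖u - z‖).eventually
      (eventually_le_nhds (by positivity : 0 < ε / 4))] with n h1 h2
  rw [show x (n + 1) - z = (x n - z) + (x (n + 1) - x n) by abel, inner_add_right,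
    real_inner_comm (x (n + 1) - x n) (u - z)]
  linarith

theorem norm_sq_smul_add_sub_le (hT : IsStrictPseudocontractionOn T C lam) {x p : H}
    (hx : x ∈ C) (hp : p ∈ C) (hTp : T p = p) {a : ℝ} (ha : 0 ≤ a) :
    ‖a • T x + (1 - a) • x - p‖ ^ 2 ≤ ‖x - p‖ ^ 2 - a * (2 * lam - a) * ‖x - T x‖ ^ 2 := by
  have hkey := mul_le_mul_of_nonneg_left (hT.mul_norm_sq_le_inner_of_isFixedPt hx hp hTp) ha
  rw [show a • T x + (1 - a) • x - p = (x - p) - a • (x - T x) by module, norm_sub_sq_real,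
    real_inner_smul_right, norm_smul, Real.norm_eq_abs, mul_pow, sq_abs, real_inner_comm]
  nlinarith

theorem norm_sq_combination_sub_le (hT : IsStrictPseudocontractionOn T C lam) {u x p : H}
    (hx : x ∈ C) (hp : p ∈ C) (hTp : T p = p) {β γ a : ℝ} (hβ : 0 ≤ β) (hγ : 0 ≤ γ)
    (hβγ : β + γ ≤ 1) (ha : 0 ≤ a) :
    ‖β • u + γ • x + (1 - β - γ) • (a • T x + (1 - a) • x) - p‖ ^ 2 ≤
      ‖x - p‖ ^ 2 + β * ‖u - p‖ ^ 2 - (1 - β - γ) * (a * (2 * lam - a)) * ‖x - T x‖ ^ 2 := by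
  have h := norm_combination_sub_sq_le hβ hγ hβγ u x (a • T x + (1 - a) • x) p
  have hstep := hT.norm_sq_smul_add_sub_le hx hp hTp ha
  nlinarith [mul_le_mul_of_nonneg_left hstep (by linarith : 0 ≤ 1 - β - γ),
    mul_nonneg hβ (sq_nonneg ‖x - p‖)]

theorem norm_smul_add_sub_le (hT : IsStrictPseudocontractionOn T C lam) {x p : H}
    (hx : x ∈ C) (hp : p ∈ C) (hTp : T p = p) {a : ℝ} (ha : a ∈ Set.Icc 0 (2 * lam)) :
    ‖a • T x + (1 - a) • x - p‖ ≤ ‖x - p‖ := by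
  refine pow_le_pow_iff_left₀ (norm_nonneg _) (norm_nonneg _) two_ne_zero |>.1 ?_
  refine (hT.norm_sq_smul_add_sub_le hx hp hTp ha.1).trans (sub_le_self _ ?_)
  exact mul_nonneg (mul_nonneg ha.1 (by linarith [ha.2])) (sq_nonneg _)

end IsStrictPseudocontractionOn

end Hilbert

theorem stmt_9_general {H : Type*} [NormedAddCommGroup H] [InnerProductSpace ℝ H] [CompleteSpace H]
    (C : Set H) (hCc : IsClosed C) (hCv : Convex ℝ C)
    (T : H → H) (lam : ℝ) (hlam : lam ∈ Set.Ioo (0:ℝ) 1)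
    (hT : ∀ x ∈ C, ∀ y ∈ C,
      (inner ℝ (T x - T y) (x - y) : ℝ) ≤ ‖x - y‖ ^ 2 - lam * ‖(x - y) - (T x - T y)‖ ^ 2)
    (hF : ∃ p ∈ C, T p = p)
    (u : H)
    (α β γ : ℕ → ℝ)
    (hα : ∀ n, α n ∈ Set.Icc (0:ℝ) (2 * lam))
    (hliminf : 0 < Filter.liminf (fun n => α n * (2 * lam - α n)) Filter.atTop)
    (hβ : ∀ n, β n ∈ Set.Ioo (0:ℝ) 1) (hγ : ∀ n, γ n ∈ Set.Ioo (0:ℝ) 1)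
    (hβγ : ∀ n, β n + γ n ≤ 1)
    (hβ0 : Filter.Tendsto β Filter.atTop (nhds 0))
    (hβsum : Filter.Tendsto (fun n => ∑ i ∈ Finset.range n, β i) Filter.atTop Filter.atTop)
    (hγsup : Filter.limsup γ Filter.atTop < 1)
    (x : ℕ → H) (hxC : ∀ n, x n ∈ C)
    (hrec : ∀ n, x (n + 1) =
      β n • u + γ n • x n + (1 - β n - γ n) • (α n • T (x n) + (1 - α n) • x n)) :
    ∃ z ∈ C, T z = z ∧ Filter.Tendsto x Filter.atTop (nhds z) := by
  have hT : IsStrictPseudocontractionOn T C lam := hT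
  obtain ⟨z, hzC, hzT, hz⟩ := hT.exists_isFixedPt_inner_le hlam.1 hCc hCv hF u
  refine ⟨z, hzC, hzT, ?_⟩
  have hcoef : ∀ n, 0 ≤ β n ∧ 0 ≤ γ n ∧ β n + γ n ≤ 1 :=
    fun n => ⟨(hβ n).1.le, (hγ n).1.le, hβγ n⟩
  have hstep : ∀ n, ‖α n • T (x n) + (1 - α n) • x n - z‖ ≤ ‖x n - z‖ :=
    fun n => hT.norm_smul_add_sub_le (hxC n) hzC hzT (hα n)
  have hR := le_max_of_succ_le_max (r := fun n => ‖x n - z‖) fun n => by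
    simpa only [hrec n, max_comm] using norm_combination_sub_le_max (hcoef n).1 (hcoef n).2.1
      (hcoef n).2.2 (hstep n)
  have hxM : ∀ n, ‖x n‖ ≤ ‖z‖ + max ‖x 0 - z‖ ‖u - z‖ := fun n =>
    (norm_le_norm_add_norm_sub' (x n) z).trans (add_le_add le_rfl (hR n))
  obtain ⟨d, hd, hδ⟩ := exists_pos_eventually_le_one_sub_sub hβ0
    (isBoundedUnder_of ⟨1, fun n => (hγ n).2.le⟩) hγsup
  obtain ⟨a, ha, hαa⟩ := exists_pos_eventually_le_of_liminf_pos
    (fun n => mul_nonneg (hα n).1 (by linarith [(hα n).2])) hliminf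
  refine tendsto_sub_nhds_zero_iff.1 (tendsto_zero_of_tendsto_const_mul_norm_sq one_pos ?_)
  refine tendsto_zero_of_le_one_sub_mul_add_mul_of_le_add_sub (K := ‖u - z‖ ^ 2)
    (e := fun n => d * a * ‖x n - T (x n)‖ ^ 2) (c := fun n => 2 * ⟪u - z, x (n + 1) - z⟫)
    (fun n => by positivity) (fun n => by positivity) (fun n => ⟨(hβ n).1, (hβ n).2.le⟩) hβ0
    hβsum (fun n => ?_) ?_ ?_
  · simpa only [one_mul, hrec n] using norm_combination_sub_sq_le_one_sub_mul_add (hcoef n).1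
      (hcoef n).2.1 (hcoef n).2.2 (hstep n)
  · filter_upwards [hδ, hαa] with n hδn han
    simp only [one_mul, hrec n]
    refine (hT.norm_sq_combination_sub_le (hxC n) hzC hzT (hcoef n).1 (hcoef n).2.1 (hcoef n).2.2
      (hα n).1).trans (sub_le_sub_left (mul_le_mul_of_nonneg_right
        (mul_le_mul hδn han ha.le (hd.le.trans hδn)) (sq_nonneg _)) _)
  · intro l hl he ε hε
    exact hT.eventually_two_inner_succ_le hlam.1 hCc hCv hz hrec hcoef hα hxC hxM
      (hβ0.mono_left hl) (tendsto_zero_of_tendsto_const_mul_norm_sq (mul_pos hd ha) he) hε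

theorem stmt_9 {H : Type*} [NormedAddCommGroup H] [InnerProductSpace ℝ H] [CompleteSpace H]
    (C : Set H) (hCc : IsClosed C) (hCv : Convex ℝ C)
    (T : H → H) (hTC : ∀ x ∈ C, T x ∈ C) (lam : ℝ) (hlam : lam ∈ Set.Ioo (0:ℝ) 1)
    (hT : ∀ x ∈ C, ∀ y ∈ C,
      (inner ℝ (T x - T y) (x - y) : ℝ) ≤ ‖x - y‖ ^ 2 - lam * ‖(x - y) - (T x - T y)‖ ^ 2)
    (hF : ∃ p ∈ C, T p = p)
    (u x₀ : H) (hu : u ∈ C) (hx₀ : x₀ ∈ C)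
    (α β γ : ℕ → ℝ)
    (hα : ∀ n, α n ∈ Set.Icc (0:ℝ) (2 * lam))
    (hliminf : 0 < Filter.liminf (fun n => α n * (2 * lam - α n)) Filter.atTop)
    (hβ : ∀ n, β n ∈ Set.Ioo (0:ℝ) 1) (hγ : ∀ n, γ n ∈ Set.Ioo (0:ℝ) 1)
    (hβγ : ∀ n, β n + γ n ≤ 1)
    (hβ0 : Filter.Tendsto β Filter.atTop (nhds 0))
    (hβsum : Filter.Tendsto (fun n => ∑ i ∈ Finset.range n, β i) Filter.atTop Filter.atTop)
    (hγsup : Filter.limsup γ Filter.atTop < 1)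
    (x : ℕ → H) (hx0 : x 0 = x₀) (hxC : ∀ n, x n ∈ C)
    (hrec : ∀ n, x (n + 1) =
      β n • u + γ n • x n + (1 - β n - γ n) • (α n • T (x n) + (1 - α n) • x n)) :
    ∃ z ∈ C, T z = z ∧ Filter.Tendsto x Filter.atTop (nhds z) :=
  stmt_9_general C hCc hCv T lam hlam hT hF u α β γ hα hliminf hβ hγ hβγ hβ0 hβsum hγsup x hxC hrec
end

section
/- Let C be a nonempty closed convex subset of a real Hilbert space, T : C → C a continuous pseudocontractive mapping with a fixed point, and {x_n} ⊂ C a bounded sequence with ‖x_n − T x_n‖ → 0. If z = lim_{t→0} x_t exists, where x_t = t u + (1 − t) T x_t for given u ∈ C, then limsup_{n→∞} ⟨u − z, x_n − z⟩ ≤ 0. -/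
/-!
Write `y = x_t`. The defining equation gives `t (u - y) = (1 - t) (y - T y)`, and
pseudocontractivity of `T` is monotonicity of `I - T`, so
`t ⟨u - y, x_n - y⟩ ≤ ‖x_n - T x_n‖ ‖x_n - y‖`, which tends to `0`.
Hence `limsup ⟨u - x_t, x_n - x_t⟩ ≤ 0` for every fixed `t`, and replacing `x_t` by `z` costs
`O(‖x_t - z‖)` uniformly in `n` because `(x_n)` is bounded.
-/

open Filter Topology

theorem Real.limsup_nonpos_of_forall_pos_eventually_le {ι : Type*} {l : Filter ι} {f : ι → ℝ}
    (h : ∀ ε > 0, ∀ᶠ i in l, f i ≤ ε) : limsup f l ≤ 0 := by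
  rw [limsup_eq]
  by_cases hS : BddBelow {a | ∀ᶠ i in l, f i ≤ a}
  · exact le_of_forall_pos_le_add fun ε hε => by simpa using csInf_le hS (h ε hε)
  · -- junk value: `sInf` of a set of reals that is not bounded below is `0`
    rw [Real.sInf_of_not_bddBelow hS]

section InnerProductSpace

variable {H : Type*} [NormedAddCommGroup H] [InnerProductSpace ℝ H]

theorem real_inner_sub_sub_le_add (u y z a : H) :
    inner ℝ (u - z) (a - z) ≤ inner ℝ (u - y) (a - y) + (‖u - y‖ + ‖a - z‖) * ‖y - z‖ := by
  have hsplit : inner ℝ (u - z) (a - z) =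
      inner ℝ (u - y) (a - y) + inner ℝ (u - y) (y - z) + inner ℝ (y - z) (a - z) := by
    simp only [inner_sub_left, inner_sub_right]
    ring
  have h₁ := real_inner_le_norm (u - y) (y - z)
  have h₂ := real_inner_le_norm (y - z) (a - z)
  linarith

def IsPseudocontractiveOn (T : H → H) (C : Set H) : Prop :=
  ∀ x ∈ C, ∀ y ∈ C, inner ℝ (T x - T y) (x - y) ≤ ‖x - y‖ ^ 2

namespace IsPseudocontractiveOn

variable {T : H → H} {C : Set H}

theorem inner_sub_apply_sub_nonneg (hT : IsPseudocontractiveOn T C) {x y : H} (hx : x ∈ C)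
    (hy : y ∈ C) : 0 ≤ inner ℝ ((x - T x) - (y - T y)) (x - y) := by
  have hsplit : (x - T x) - (y - T y) = (x - y) - (T x - T y) := by abel
  rw [hsplit, inner_sub_left, real_inner_self_eq_norm_sq]
  linarith [hT x hx y hy]

theorem inner_sub_apply_le (hT : IsPseudocontractiveOn T C) {y a : H} (hy : y ∈ C)
    (ha : a ∈ C) : inner ℝ (y - T y) (a - y) ≤ ‖a - T a‖ * ‖a - y‖ := by
  have hmono := hT.inner_sub_apply_sub_nonneg ha hy
  rw [inner_sub_left] at hmono
  linarith [real_inner_le_norm (a - T a) (a - y)]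

theorem mul_inner_sub_le_of_eq_smul_add_smul (hT : IsPseudocontractiveOn T C) {t : ℝ}
    (ht₀ : 0 ≤ t) (ht₁ : t ≤ 1) {u y a : H} (hy : y ∈ C) (ha : a ∈ C)
    (hyu : y = t • u + (1 - t) • T y) :
    t * inner ℝ (u - y) (a - y) ≤ ‖a - T a‖ * ‖a - y‖ := by
  have hanchor : t • (u - y) = (1 - t) • (y - T y) := by
    rw [← sub_eq_zero]
    calc t • (u - y) - (1 - t) • (y - T y) = t • u + (1 - t) • T y - y := by module
      _ = 0 := by rw [← hyu, sub_self]
  rw [← real_inner_smul_left, hanchor, real_inner_smul_left]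
  have hbound := hT.inner_sub_apply_le hy ha
  have hnn : 0 ≤ ‖a - T a‖ * ‖a - y‖ := by positivity
  nlinarith

theorem eventually_inner_sub_le_of_eq_smul_add_smul (hT : IsPseudocontractiveOn T C)
    {x : ℕ → H} (hxC : ∀ n, x n ∈ C) (hbdd : Bornology.IsBounded (Set.range x))
    (hfp : Tendsto (fun n => ‖x n - T (x n)‖) atTop (𝓝 0)) {t : ℝ} (ht₀ : 0 < t) (ht₁ : t ≤ 1)
    {u y : H} (hy : y ∈ C) (hyu : y = t • u + (1 - t) • T y) :
    ∀ ε > 0, ∀ᶠ n in atTop, inner ℝ (u - y) (x n - y) ≤ ε := by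
  intro ε hε
  obtain ⟨R, hR⟩ := hbdd.exists_norm_le
  have hlim : Tendsto (fun n => ‖x n - T (x n)‖ * (R + ‖y‖) / t) atTop (𝓝 0) := by
    simpa using (hfp.mul_const (R + ‖y‖)).div_const t
  filter_upwards [hlim.eventually (ge_mem_nhds hε)] with n hn
  have hxy : ‖x n - y‖ ≤ R + ‖y‖ := (norm_sub_le _ _).trans (by gcongr; exact hR _ ⟨n, rfl⟩)
  have hkey := hT.mul_inner_sub_le_of_eq_smul_add_smul ht₀.le ht₁ hy (hxC n) hyu
  have hD : ‖x n - T (x n)‖ * ‖x n - y‖ ≤ ‖x n - T (x n)‖ * (R + ‖y‖) := by gcongr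
  refine le_trans ?_ hn
  rw [le_div_iff₀ ht₀]
  linarith

end IsPseudocontractiveOn

end InnerProductSpace

theorem stmt_12_general {H : Type*} [NormedAddCommGroup H] [InnerProductSpace ℝ H]
    (C : Set H)
    (T : H → H)
    (hT : ∀ x ∈ C, ∀ y ∈ C, (inner ℝ (T x - T y) (x - y) : ℝ) ≤ ‖x - y‖ ^ 2)
    (u : H)
    (x : ℕ → H) (hxC : ∀ n, x n ∈ C)
    (hbdd : Bornology.IsBounded (Set.range x))
    (hfp : Filter.Tendsto (fun n => ‖x n - T (x n)‖) Filter.atTop (nhds 0))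
    (xt : ℝ → H)
    (hxt : ∀ t ∈ Set.Ioo (0:ℝ) 1, xt t ∈ C ∧ xt t = t • u + (1 - t) • T (xt t))
    (z : H) (hz : Filter.Tendsto xt (nhdsWithin 0 (Set.Ioo (0:ℝ) 1)) (nhds z)) :
    Filter.limsup (fun n => (inner ℝ (u - z) (x n - z) : ℝ)) Filter.atTop ≤ 0 := by
  obtain ⟨R, hR⟩ := hbdd.exists_norm_le
  refine Real.limsup_nonpos_of_forall_pos_eventually_le fun ε hε => ?_
  have hshift : Tendsto (fun t => (‖u - xt t‖ + (R + ‖z‖)) * ‖xt t - z‖)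
      (𝓝[Set.Ioo 0 1] 0) (𝓝 0) := by
    simpa using ((hz.const_sub u).norm.add_const (R + ‖z‖)).mul
      (tendsto_iff_norm_sub_tendsto_zero.1 hz)
  have := left_nhdsWithin_Ioo_neBot (zero_lt_one' ℝ)
  obtain ⟨t, hsmall, ht⟩ :=
    ((hshift.eventually (gt_mem_nhds (half_pos hε))).and self_mem_nhdsWithin).exists
  obtain ⟨hyC, hyu⟩ := hxt t ht
  filter_upwards [IsPseudocontractiveOn.eventually_inner_sub_le_of_eq_smul_add_smul hT hxC hbdd
    hfp ht.1 ht.2.le hyC hyu (ε / 2) (half_pos hε)] with n hn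
  have hxz : ‖x n - z‖ ≤ R + ‖z‖ := (norm_sub_le _ _).trans (by gcongr; exact hR _ ⟨n, rfl⟩)
  have hcost : (‖u - xt t‖ + ‖x n - z‖) * ‖xt t - z‖ ≤ (‖u - xt t‖ + (R + ‖z‖)) * ‖xt t - z‖ := by
    gcongr
  linarith [real_inner_sub_sub_le_add u (xt t) z (x n)]

theorem stmt_12 {H : Type*} [NormedAddCommGroup H] [InnerProductSpace ℝ H] [CompleteSpace H]
    (C : Set H) (hCne : C.Nonempty) (hCc : IsClosed C) (hCv : Convex ℝ C)
    (T : H → H) (hTC : ∀ x ∈ C, T x ∈ C) (hTcont : ContinuousOn T C)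
    (hT : ∀ x ∈ C, ∀ y ∈ C, (inner ℝ (T x - T y) (x - y) : ℝ) ≤ ‖x - y‖ ^ 2)
    (hF : ∃ p ∈ C, T p = p) (u : H) (hu : u ∈ C)
    (x : ℕ → H) (hxC : ∀ n, x n ∈ C)
    (hbdd : Bornology.IsBounded (Set.range x))
    (hfp : Filter.Tendsto (fun n => ‖x n - T (x n)‖) Filter.atTop (nhds 0))
    (xt : ℝ → H)
    (hxt : ∀ t ∈ Set.Ioo (0:ℝ) 1, xt t ∈ C ∧ xt t = t • u + (1 - t) • T (xt t))
    (z : H) (hz : Filter.Tendsto xt (nhdsWithin 0 (Set.Ioo (0:ℝ) 1)) (nhds z)) :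
    Filter.limsup (fun n => (inner ℝ (u - z) (x n - z) : ℝ)) Filter.atTop ≤ 0 :=
  stmt_12_general C T hT u x hxC hbdd hfp xt hxt z hz
end
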